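/- arXiv:math/9406227 — 2 statements merged into one kernel-verified Lean document; each statement's English description precedes it below -/
import Mathlib

section
/- The Szegő polynomials satisfy the Rodrigues-type formula H_n(z|q) = (q^{-1/2} - q^{1/2})^n · (1/w_c(z|q)) · T_{q,z}^n( w_c(z|q) ), where T_{q,z}^n denotes the n-fold iterate of T_{q,z}. -/
open Finset MeasureTheory intervalIntegral Complex

/-- finite q-shifted factorial `(a;q)_n` -/
noncomputable def qPoch (q a : ℂ) (n : ℕ) : ℂ := ∏ k ∈ Finset.range n, (1 - a * q ^ k)

/-- infinite q-shifted factorial `(a;q)_∞` -/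
noncomputable def qPochInf (q a : ℂ) : ℂ := ∏' k : ℕ, (1 - a * q ^ k)

/-- the q-difference operator `D_{q,z}` -/
noncomputable def Dq (q : ℂ) (f : ℂ → ℂ) : ℂ → ℂ := fun z => (f z - f (q * z)) / ((1 - q) * z)

/-- the operator `T_{q,z}` -/
noncomputable def Tq (q : ℂ) (f : ℂ → ℂ) : ℂ → ℂ := fun z => z * (f z - q * f (q * z)) / (1 - q)

/-- the Szegő polynomials `H_n(z|q)`, with `s = q^{1/2}` -/
noncomputable def szH (q s : ℂ) (n : ℕ) : ℂ → ℂ := fun z =>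
  ∑ k ∈ Finset.range (n + 1), qPoch q q n / (qPoch q q k * qPoch q q (n - k)) * (z / s) ^ k

/-- the Szegő weight `w_c(z|q) = (q^{1/2}z;q)_∞ (q^{1/2}/z;q)_∞`, with `s = q^{1/2}` -/
noncomputable def wc (q s : ℂ) : ℂ → ℂ := fun z => qPochInf q (s * z) * qPochInf q (s / z)

lemma qPoch_succ (q a : ℂ) (m : ℕ) : qPoch q a (m+1) = qPoch q a m * (1 - a * q ^ m) :=
  Finset.prod_range_succ _ _

lemma qPoch_ne {q : ℝ} (hq : 0 < q) (hq1 : q < 1) (m : ℕ) : qPoch (q:ℂ) (q:ℂ) m ≠ 0 := by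
  refine Finset.prod_ne_zero_iff.mpr fun k _ => ?_
  have h1 : q * q ^ k < 1 := by
    have := pow_lt_one₀ hq.le hq1 (Nat.succ_ne_zero k)
    rwa [pow_succ'] at this
  have : (1:ℂ) - (q:ℂ) * (q:ℂ)^k = ((1 - q * q^k : ℝ) : ℂ) := by push_cast; ring
  rw [this]
  exact_mod_cast (sub_pos.mpr h1).ne'

lemma tprod_zero_of (f : ℕ → ℂ) (k0 : ℕ) (h : f k0 = 0) : ∏' k, f k = 0 := by
  have : HasProd f 0 := by
    rw [HasProd]
    apply Filter.Tendsto.congr' _ tendsto_const_nhds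
    filter_upwards [Filter.eventually_ge_atTop ({k0} : Finset ℕ)] with s hs
    exact (Finset.prod_eq_zero (hs (Finset.mem_singleton_self k0)) h).symm
  exact this.tprod_eq

lemma mult_aux {q : ℝ} (hq : 0 < q) (hq1 : q < 1) (a : ℂ)
    (hzero : ∀ k, 1 - a * (q:ℂ) ^ k ≠ 0) :
    Multipliable (fun k : ℕ => 1 - a * (q:ℂ) ^ k) := by
  apply Complex.multipliable_of_summable_log
  have hgeo : Summable (fun k : ℕ => (3/2:ℝ) * (‖a‖ * q ^ k)) :=
    ((summable_geometric_of_lt_one hq.le hq1).mul_left ‖a‖).mul_left (3/2)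
  apply hgeo.of_norm_bounded_eventually_nat
  have htend : Filter.Tendsto (fun k : ℕ => ‖a‖ * q ^ k) Filter.atTop (nhds 0) := by
    simpa using (tendsto_pow_atTop_nhds_zero_of_lt_one hq.le hq1).const_mul ‖a‖
  filter_upwards [htend.eventually_le_const (by norm_num : (0:ℝ) < 1/2)] with k hk
  have hn : ‖-(a * (q:ℂ)^k)‖ ≤ 1/2 := by
    rw [norm_neg, norm_mul]
    simpa [abs_of_pos hq] using hk
  have := Complex.norm_log_one_add_half_le_self hn
  rw [show (1:ℂ) + -(a * (q:ℂ)^k) = 1 - a * (q:ℂ)^k by ring] at this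
  apply this.trans
  rw [norm_neg, norm_mul]
  simp [abs_of_pos hq]

lemma qPochInf_step {q : ℝ} (hq : 0 < q) (hq1 : q < 1) (a : ℂ) :
    qPochInf (q:ℂ) a = (1 - a) * qPochInf (q:ℂ) ((q:ℂ) * a) := by
  by_cases hzero : ∃ k, 1 - a * (q:ℂ) ^ k = 0
  · obtain ⟨k0, hk0⟩ := hzero
    rw [qPochInf, tprod_zero_of _ k0 hk0]
    rcases k0 with _ | k1
    · simp only [pow_zero, mul_one] at hk0
      rw [hk0, zero_mul]
    · rw [qPochInf, tprod_zero_of (fun k => 1 - ((q:ℂ)*a) * (q:ℂ)^k) k1, mul_zero]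
      rw [← hk0]; ring
  · push_neg at hzero
    have hzero' : ∀ k, 1 - ((q:ℂ) * a) * (q:ℂ) ^ k ≠ 0 := fun k => by
      have := hzero (k+1); rw [pow_succ'] at this
      intro h; apply this; rw [← h]; ring
    have hmult : Multipliable (fun k : ℕ => 1 - a * (q:ℂ) ^ (k + 1)) := by
      apply (mult_aux hq hq1 ((q:ℂ)*a) hzero').congr
      intro k; rw [pow_succ']; ring
    have h0 := tprod_eq_zero_mul' (f := fun k => 1 - a * (q:ℂ)^k) hmult
    rw [qPochInf, h0]
    rw [pow_zero, mul_one]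
    congr 1
    rw [qPochInf]
    exact tprod_congr fun k => by rw [pow_succ']; ring

noncomputable def gc (q : ℂ) (n k : ℕ) : ℂ := qPoch q q n / (qPoch q q k * qPoch q q (n - k))

lemma pascal {q : ℝ} (hq : 0 < q) (hq1 : q < 1) {n k : ℕ} (hk : k < n) :
    gc (q:ℂ) (n+1) (k+1) = gc (q:ℂ) n k + (q:ℂ)^(k+1) * gc (q:ℂ) n (k+1) := by
  obtain ⟨j, rfl⟩ : ∃ j, n = k + 1 + j := ⟨n - (k+1), by omega⟩
  have h1 : k + 1 + j + 1 - (k + 1) = j + 1 := by omega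
  have h2 : k + 1 + j - k = j + 1 := by omega
  have h3 : k + 1 + j - (k + 1) = j := by omega
  rw [gc, gc, gc, h1, h2, h3]
  rw [show k+1+j+1 = (k+1+j)+1 by omega, qPoch_succ (q:ℂ) (q:ℂ) (k+1+j),
    qPoch_succ (q:ℂ) (q:ℂ) k, qPoch_succ (q:ℂ) (q:ℂ) j]
  have nk := qPoch_ne hq hq1 k
  have nj := qPoch_ne hq hq1 j
  have nkj := qPoch_ne hq hq1 (k+1+j)
  have e1 : (1:ℂ) - (q:ℂ) * (q:ℂ)^k ≠ 0 := by
    have := qPoch_ne hq hq1 (k+1); rw [qPoch_succ] at this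
    exact right_ne_zero_of_mul this
  have e2 : (1:ℂ) - (q:ℂ) * (q:ℂ)^j ≠ 0 := by
    have := qPoch_ne hq hq1 (j+1); rw [qPoch_succ] at this
    exact right_ne_zero_of_mul this
  field_simp
  ring

lemma gc_zero {q : ℝ} (hq : 0 < q) (hq1 : q < 1) (m : ℕ) : gc (q:ℂ) m 0 = 1 := by
  rw [gc, Nat.sub_zero, show qPoch (q:ℂ) (q:ℂ) 0 = 1 from rfl, one_mul,
    div_self (qPoch_ne hq hq1 m)]

lemma gc_diag {q : ℝ} (hq : 0 < q) (hq1 : q < 1) (m : ℕ) : gc (q:ℂ) m m = 1 := by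
  rw [gc, Nat.sub_self, show qPoch (q:ℂ) (q:ℂ) 0 = 1 from rfl, mul_one,
    div_self (qPoch_ne hq hq1 m)]

lemma star {q : ℝ} (hq : 0 < q) (hq1 : q < 1) (n : ℕ) (x : ℂ) :
    ∑ k ∈ range (n+2), gc (q:ℂ) (n+1) k * x^k
      = ∑ k ∈ range (n+1), gc (q:ℂ) n k * x^(k+1)
        + ∑ k ∈ range (n+1), gc (q:ℂ) n k * ((q:ℂ)^k * x^k) := by
  rw [Finset.sum_range_succ' (fun k => gc (q:ℂ) (n+1) k * x^k) (n+1)]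
  conv_rhs => rw [Finset.sum_range_succ' (fun k => gc (q:ℂ) n k * ((q:ℂ)^k * x^k)) n]
  rw [Finset.sum_range_succ (fun k => gc (q:ℂ) (n+1) (k+1) * x^(k+1)) n]
  rw [Finset.sum_range_succ (fun k => gc (q:ℂ) n k * x^(k+1)) n]
  simp only [gc_zero hq hq1, gc_diag hq hq1, pow_zero, mul_one, one_mul]
  have hsum : ∑ k ∈ range n, gc (q:ℂ) (n+1) (k+1) * x^(k+1)
      = ∑ k ∈ range n, (gc (q:ℂ) n k * x^(k+1) + gc (q:ℂ) n (k+1) * ((q:ℂ)^(k+1) * x^(k+1))) := by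
    refine Finset.sum_congr rfl fun k hk => ?_
    rw [pascal hq hq1 (Finset.mem_range.mp hk)]
    ring
  rw [hsum, Finset.sum_add_distrib]
  ring

lemma szH_gc (q s : ℂ) (n : ℕ) (z : ℂ) :
    szH q s n z = ∑ k ∈ range (n+1), gc q n k * (z/s)^k := rfl

lemma szH_rec {q : ℝ} (hq : 0 < q) (hq1 : q < 1) {s : ℂ} (hs : s ≠ 0) (n : ℕ) (z : ℂ) :
    s * szH (q:ℂ) s (n+1) z = z * szH (q:ℂ) s n z + s * szH (q:ℂ) s n ((q:ℂ)*z) := by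
  rw [szH_gc, szH_gc, szH_gc, show n+1+1 = n+2 from rfl, star hq hq1 n (z/s), mul_add]
  congr 1
  · rw [Finset.mul_sum, Finset.mul_sum]
    refine Finset.sum_congr rfl fun k _ => ?_
    field_simp
    linear_combination (gc (q:ℂ) n k * z * z ^ k * s⁻¹ ^ k) * mul_inv_cancel₀ hs
  · congr 1
    refine Finset.sum_congr rfl fun k _ => ?_
    rw [mul_div_assoc, mul_pow]

lemma key {q : ℝ} (hq : 0 < q) (hq1 : q < 1) {s : ℂ} (hs : s ≠ 0) (hs2 : s^2 = (q:ℂ)) (n : ℕ) :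
    ∀ z : ℂ, z ≠ 0 → (Tq (q:ℂ))^[n] (wc (q:ℂ) s) z
      = (s/(1-(q:ℂ)))^n * (wc (q:ℂ) s z * szH (q:ℂ) s n z) := by
  have hq0 : (q:ℂ) ≠ 0 := by exact_mod_cast hq.ne'
  have h1s2 : (1:ℂ) - s^2 ≠ 0 := by
    rw [hs2, show (1:ℂ) - (q:ℂ) = ((1 - q : ℝ) : ℂ) by push_cast; ring]
    exact_mod_cast (sub_pos.mpr hq1).ne'
  induction n with
  | zero =>
    intro z hz
    simp [szH, qPoch]
  | succ n ih =>
    intro z hz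
    have hqz : (q:ℂ) * z ≠ 0 := mul_ne_zero hq0 hz
    rw [Function.iterate_succ_apply', Tq]
    rw [ih z hz, ih ((q:ℂ)*z) hqz]
    have hwz : wc (q:ℂ) s z
        = (1 - s*z) * (qPochInf (q:ℂ) (s*((q:ℂ)*z)) * qPochInf (q:ℂ) (s/z)) := by
      rw [wc, qPochInf_step hq hq1 (s*z), mul_left_comm (q:ℂ) s z]
      ring
    have hwqz : wc (q:ℂ) s ((q:ℂ)*z)
        = (1 - s/((q:ℂ)*z)) * (qPochInf (q:ℂ) (s*((q:ℂ)*z)) * qPochInf (q:ℂ) (s/z)) := by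
      have c2 : (q:ℂ)*(s/((q:ℂ)*z)) = s/z := by
        rw [mul_div_assoc', mul_div_mul_left _ _ hq0]
      rw [wc, qPochInf_step hq hq1 (s/((q:ℂ)*z)), c2]
      ring
    rw [hwz, hwqz]
    set U := qPochInf (q:ℂ) (s*((q:ℂ)*z)) * qPochInf (q:ℂ) (s/z) with hU
    have hrec := szH_rec hq hq1 hs n z
    have e : (q:ℂ) * (1 - s/((q:ℂ)*z)) * z = (q:ℂ)*z - s := by
      field_simp
    have hdag : z * ((1-s*z) * szH (q:ℂ) s n z)
        - ((q:ℂ) * (1 - s/((q:ℂ)*z))) * z * szH (q:ℂ) s n ((q:ℂ)*z)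
        = s * (1-s*z) * szH (q:ℂ) s (n+1) z := by
      linear_combination (-(1 - s*z)) * hrec + (- szH (q:ℂ) s n ((q:ℂ)*z)) * e
        + (z * szH (q:ℂ) s n ((q:ℂ)*z)) * hs2
    rw [pow_succ]
    linear_combination ((s/(1-(q:ℂ)))^n * U / (1 - (q:ℂ))) * hdag
theorem stmt4 (q : ℝ) (hq : 0 < q) (hq1 : q < 1) (n : ℕ) (z : ℂ) (hz : z ≠ 0)
    (hw : wc (q : ℂ) (Real.sqrt q : ℂ) z ≠ 0) :
    szH (q : ℂ) (Real.sqrt q : ℂ) n z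
      = ((Real.sqrt q : ℂ)⁻¹ - (Real.sqrt q : ℂ)) ^ n / wc (q : ℂ) (Real.sqrt q : ℂ) z *
          ((Tq (q : ℂ))^[n] (wc (q : ℂ) (Real.sqrt q : ℂ)) z) := by
  set s : ℂ := ((Real.sqrt q : ℝ) : ℂ) with hsdef
  have hs : s ≠ 0 := by
    simp only [hsdef, ne_eq, Complex.ofReal_eq_zero]
    exact (Real.sqrt_pos.mpr hq).ne'
  have hs2 : s ^ 2 = (q : ℂ) := by
    rw [hsdef, ← Complex.ofReal_pow, Real.sq_sqrt hq.le]
  have h1q : (1:ℂ) - (q:ℂ) ≠ 0 := by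
    rw [show (1:ℂ) - (q:ℂ) = ((1 - q : ℝ) : ℂ) by push_cast; ring]
    exact_mod_cast (sub_pos.mpr hq1).ne'
  rw [key hq hq1 hs hs2 n z hz]
  have hone : (s⁻¹ - s) * (s/(1-(q:ℂ))) = 1 := by
    field_simp
    linear_combination (-1 : ℂ) * hs2
  have hpow : (s⁻¹ - s)^n * (s/(1-(q:ℂ)))^n = 1 := by rw [← mul_pow, hone, one_pow]
  rw [div_mul_eq_mul_div, ← mul_assoc, hpow, one_mul, mul_comm (wc (q:ℂ) s z),
    mul_div_assoc, div_self hw, mul_one]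
end

section
/- The Szegő polynomials H_n(z|q) satisfy the q-Sturm–Liouville equation T_{q,z}( w_c(z|q) · D_{q,z} H_n(z|q) ) = λ_n · w_c(z|q) · H_n(z|q), with eigenvalue λ_n = (1 - q^n)/(1-q)^2. -/
open Finset MeasureTheory intervalIntegral Complex

lemma aux_multipliable (q a : ℂ) (hq : ‖q‖ < 1) :
    Multipliable (fun k : ℕ => 1 - a * q ^ k) := by
  by_cases h : ∀ k : ℕ, 1 - a * q ^ k ≠ 0
  · -- all factors nonzero: use log-summability
    apply Complex.multipliable_of_summable_log
    apply Summable.of_norm_bounded_eventually_nat (g := fun k => 3/2 * (‖a‖ * ‖q‖ ^ k))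
    · exact ((summable_geometric_of_lt_one (norm_nonneg q) hq).mul_left _).mul_left _
    · have h0 : Filter.Tendsto (fun k : ℕ => ‖a‖ * ‖q‖ ^ k) Filter.atTop (nhds 0) := by
        simpa using (tendsto_pow_atTop_nhds_zero_of_lt_one (norm_nonneg q) hq).const_mul ‖a‖
      filter_upwards [h0.eventually_le_const (by norm_num : (0:ℝ) < 1/2)] with k hk
      have h2 : ‖-(a * q ^ k)‖ ≤ 1/2 := by
        rw [norm_neg, norm_mul, norm_pow]; exact hk
      calc ‖Complex.log (1 - a * q ^ k)‖ = ‖Complex.log (1 + -(a * q ^ k))‖ := by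
            rw [sub_eq_add_neg]
        _ ≤ 3/2 * ‖-(a * q ^ k)‖ := Complex.norm_log_one_add_half_le_self h2
        _ = 3/2 * (‖a‖ * ‖q‖ ^ k) := by rw [norm_neg, norm_mul, norm_pow]
  · -- some factor is zero: product converges to 0
    push_neg at h
    obtain ⟨j, hj⟩ := h
    refine ⟨0, ?_⟩
    rw [HasProd]
    refine Filter.Tendsto.congr' ?_ tendsto_const_nhds
    filter_upwards [Filter.eventually_ge_atTop {j}] with s hs
    exact (Finset.prod_eq_zero (hs (Finset.mem_singleton_self j)) hj).symm

set_option maxHeartbeats 1000000 in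
lemma qPochInf_shift (q a : ℂ) (hq : ‖q‖ < 1) :
    qPochInf q a = (1 - a) * qPochInf q (q * a) := by
  have hm : Multipliable (fun n : ℕ => 1 - a * q ^ (n + 1)) :=
    (aux_multipliable q (a * q) hq).congr fun n => by ring
  have h : ∏' b : ℕ, (1 - a * q ^ b) = (1 - a * q ^ 0) * ∏' b : ℕ, (1 - a * q ^ (b + 1)) :=
    tprod_eq_zero_mul' hm
  rw [qPochInf, h, pow_zero, mul_one, qPochInf]
  congr 1
  exact tprod_congr fun k => by ring

lemma qPoch_ne_zero (q : ℝ) (hq : 0 < q) (hq1 : q < 1) (m : ℕ) :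
    qPoch (q : ℂ) (q : ℂ) m ≠ 0 := by
  rw [qPoch, Finset.prod_ne_zero_iff]
  intro k _
  have h : ((q : ℂ)) * (q : ℂ) ^ k = ((q * q ^ k : ℝ) : ℂ) := by push_cast; ring
  rw [h, sub_ne_zero]
  intro hc
  have h2 : (1 : ℝ) = q * q ^ k := by exact_mod_cast hc
  nlinarith [pow_le_one₀ hq.le hq1.le (n := k), pow_pos hq k]

lemma key_identity (q : ℝ) (hq : 0 < q) (hq1 : q < 1) (s : ℂ) (n : ℕ) (z : ℂ) :
    szH (q : ℂ) s n ((q : ℂ) * ((q : ℂ) * z)) =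
      szH (q : ℂ) s n ((q : ℂ) * z) -
        (q : ℂ) * z / s * (szH (q : ℂ) s n ((q : ℂ) * z) - (q : ℂ) ^ n * szH (q : ℂ) s n z) := by
  have hb : ∀ k : ℕ, k < n →
      qPoch (q:ℂ) (q:ℂ) n / (qPoch (q:ℂ) (q:ℂ) (k+1) * qPoch (q:ℂ) (q:ℂ) (n - (k+1)))
          * (1 - (q:ℂ) ^ (k+1)) =
      qPoch (q:ℂ) (q:ℂ) n / (qPoch (q:ℂ) (q:ℂ) k * qPoch (q:ℂ) (q:ℂ) (n - k))
          * (1 - (q:ℂ) ^ (n - k)) := by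
    intro k hk
    have h1 : qPoch (q:ℂ) (q:ℂ) (k+1) = qPoch (q:ℂ) (q:ℂ) k * (1 - (q:ℂ) * (q:ℂ) ^ k) :=
      Finset.prod_range_succ _ _
    have h2 : n - k = (n - (k+1)) + 1 := by omega
    have h3 : qPoch (q:ℂ) (q:ℂ) (n - k)
        = qPoch (q:ℂ) (q:ℂ) (n - (k+1)) * (1 - (q:ℂ) * (q:ℂ) ^ (n - (k+1))) := by
      rw [h2]; exact Finset.prod_range_succ _ _
    have e1 : (1 - (q:ℂ) ^ (k+1)) = 1 - (q:ℂ) * (q:ℂ) ^ k := by ring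
    have e2 : (1 - (q:ℂ) ^ (n - k)) = 1 - (q:ℂ) * (q:ℂ) ^ (n - (k+1)) := by rw [h2]; ring
    rw [h1, h3, e1, e2]
    have n1 := qPoch_ne_zero q hq hq1 k
    have n2 := qPoch_ne_zero q hq hq1 (n - (k+1))
    have n3 : (1 - (q:ℂ) * (q:ℂ) ^ k) ≠ 0 := by
      have h4 := qPoch_ne_zero q hq hq1 (k+1)
      rw [h1, mul_ne_zero_iff] at h4; exact h4.2
    have n4 : (1 - (q:ℂ) * (q:ℂ) ^ (n - (k+1))) ≠ 0 := by
      have h5 := qPoch_ne_zero q hq hq1 (n - k)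
      rw [h3, mul_ne_zero_iff] at h5; exact h5.2
    field_simp
  simp only [szH]
  have hp2 : ∀ k : ℕ, ((q:ℂ) * ((q:ℂ) * z) / s) ^ k = (q:ℂ) ^ k * (q:ℂ) ^ k * (z / s) ^ k := by
    intro k
    rw [show (q:ℂ) * ((q:ℂ) * z) / s = (q:ℂ) * (q:ℂ) * (z/s) by ring, mul_pow, mul_pow]
  have hp1 : ∀ k : ℕ, ((q:ℂ) * z / s) ^ k = (q:ℂ) ^ k * (z / s) ^ k := by
    intro k; rw [show (q:ℂ) * z / s = (q:ℂ) * (z/s) by ring, mul_pow]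
  simp only [hp1, hp2]
  set Q : ℂ := (q : ℂ) with hQ
  set x : ℂ := z / s with hx
  set b : ℕ → ℂ := fun k => qPoch Q Q n / (qPoch Q Q k * qPoch Q Q (n - k)) with hbdef
  have hQx : Q * z / s = Q * x := by rw [hx]; ring
  rw [hQx, ← sub_eq_zero]
  have step1 : Q * x * ((∑ k ∈ Finset.range (n+1), b k * (Q ^ k * x ^ k))
        - Q ^ n * ∑ k ∈ Finset.range (n+1), b k * x ^ k)
      = ∑ k ∈ Finset.range (n+1), b k * (Q^(k+1) - Q^(n+1)) * x^(k+1) := by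
    rw [Finset.mul_sum, ← Finset.sum_sub_distrib, Finset.mul_sum]
    exact Finset.sum_congr rfl fun k _ => by ring
  rw [step1, show ∀ X Y Z : ℂ, X - (Y - Z) = (X - Y) + Z from fun X Y Z => by ring,
    ← Finset.sum_sub_distrib,
    Finset.sum_range_succ' (fun k => b k * (Q ^ k * Q ^ k * x ^ k) - b k * (Q ^ k * x ^ k)) n,
    Finset.sum_range_succ]
  simp only [pow_zero, one_mul, mul_one, sub_self, mul_zero, zero_mul, add_zero]
  rw [← Finset.sum_add_distrib]
  apply Finset.sum_eq_zero
  intro k hk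
  rw [Finset.mem_range] at hk
  have hpow : Q^(k+1) * Q^(n-k) = Q^(n+1) := by rw [← pow_add]; congr 1; omega
  have hbk := hb k hk
  linear_combination (x^(k+1) * (-Q^(k+1))) * hbk + (b k * x^(k+1)) * hpow

lemma alg_step (s z v A B E : ℂ) (hz : z ≠ 0) (hs : s ≠ 0) (h1 : (1:ℂ) - s * s ≠ 0) :
    z * ((1 - s*z) * v * ((A - B) / ((1 - s*s) * z))
        - (s*s) * ((1 - s/((s*s)*z)) * v *
          ((B - (B - s*s*z/s*(B - E*A))) / ((1 - s*s) * ((s*s)*z))))) / (1 - s*s)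
      = (1 - E) / (1 - s*s)^2 * ((1 - s*z) * v) * A := by
  have hd1 : (1 - s*s) * z ≠ 0 := mul_ne_zero h1 hz
  have hd2 : (1 - s*s) * ((s*s)*z) ≠ 0 := mul_ne_zero h1 (mul_ne_zero (mul_ne_zero hs hs) hz)
  have e4 : 1 - s/((s*s)*z) = (s*z - 1)/(s*z) := by
    field_simp
  have e5 : B - (B - s*s*z/s*(B - E*A)) = s*z*(B - E*A) := by
    field_simp
    ring
  rw [e4, e5]
  have c1 : (1 - s*z) * v * ((A - B) / ((1 - s*s) * z))
      = ((1 - s*z) * v * (A - B)) / ((1 - s*s) * z) := (mul_div_assoc _ _ _).symm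
  have c2 : (s*s) * ((s*z - 1)/(s*z) * v * ((s*z*(B - E*A)) / ((1 - s*s) * ((s*s)*z))))
      = ((s*s) * ((s*z - 1) * v * (s*z*(B - E*A)))) / ((s*z) * ((1 - s*s) * ((s*s)*z))) := by
    rw [div_mul_eq_mul_div, div_mul_div_comm, mul_div_assoc]
    ring
  rw [c1, c2, div_sub_div _ _ hd1 (mul_ne_zero (mul_ne_zero hs hz) hd2), mul_div_assoc, div_div]
  rw [mul_div_assoc', div_eq_iff (by apply_rules [mul_ne_zero])]
  field_simp
  ring

theorem stmt5 (q : ℝ) (hq : 0 < q) (hq1 : q < 1) (n : ℕ) (z : ℂ) (hz : z ≠ 0) :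
    Tq (q : ℂ) (fun w => wc (q : ℂ) (Real.sqrt q : ℂ) w *
        Dq (q : ℂ) (szH (q : ℂ) (Real.sqrt q : ℂ) n) w) z
      = (1 - (q : ℂ) ^ n) / (1 - (q : ℂ)) ^ 2 * wc (q : ℂ) (Real.sqrt q : ℂ) z *
          szH (q : ℂ) (Real.sqrt q : ℂ) n z := by
  set s : ℂ := (Real.sqrt q : ℂ) with hs
  have hq0 : (q : ℂ) ≠ 0 := by exact_mod_cast hq.ne'
  have hqnorm : ‖(q : ℂ)‖ < 1 := by
    rw [Complex.norm_real, Real.norm_eq_abs, abs_of_pos hq]; exact hq1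
  have hs2 : s * s = (q : ℂ) := by
    rw [hs, ← Complex.ofReal_mul, Real.mul_self_sqrt hq.le]
  have hsne : s ≠ 0 := by
    intro h0
    rw [h0, zero_mul] at hs2
    exact hq0 hs2.symm
  have h1q : (1 : ℂ) - (q : ℂ) ≠ 0 := by
    intro hc
    have : (q : ℂ) = 1 := by linear_combination -hc
    have : q = (1 : ℝ) := by exact_mod_cast this
    linarith
  -- weight relations
  have hw1 : wc (q:ℂ) s z = (1 - s * z) * (qPochInf (q:ℂ) ((q:ℂ) * (s * z)) * qPochInf (q:ℂ) (s / z)) := by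
    rw [wc, qPochInf_shift (q:ℂ) (s*z) hqnorm]; ring
  have hw2 : wc (q:ℂ) s ((q:ℂ) * z)
      = (1 - s / ((q:ℂ) * z)) * (qPochInf (q:ℂ) ((q:ℂ) * (s * z)) * qPochInf (q:ℂ) (s / z)) := by
    rw [wc, qPochInf_shift (q:ℂ) (s/((q:ℂ)*z)) hqnorm]
    have e1 : s * ((q:ℂ) * z) = (q:ℂ) * (s * z) := by ring
    have e2 : (q:ℂ) * (s / ((q:ℂ) * z)) = s / z := by
      field_simp
    rw [e1, e2]; ring
  have key := key_identity q hq hq1 s n z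
  rw [Tq]
  simp only [Dq]
  rw [hw1, hw2]
  set v : ℂ := qPochInf (q:ℂ) ((q:ℂ) * (s * z)) * qPochInf (q:ℂ) (s / z) with hv
  set A : ℂ := szH (q:ℂ) s n z with hA
  set B : ℂ := szH (q:ℂ) s n ((q:ℂ) * z) with hB
  set C : ℂ := szH (q:ℂ) s n ((q:ℂ) * ((q:ℂ) * z)) with hC
  -- key : C = B - q*z/s*(B - q^n*A)
  have h1s : (1:ℂ) - s * s ≠ 0 := by rw [hs2]; exact h1q
  rw [key, ← hs2]
  exact alg_step s z v A B ((s*s)^n) hz hsne h1s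
end
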